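/- Let a be a single letter, let L ⊆ {a}* be any language over the one-letter alphabet {a}, and let θ ∈ (0, 2]. Then the isometry group Isom_θ(L) has at most two elements; in particular, it is either trivial or isomorphic to the cyclic group of order 2. -/

import Mathlib

namespace Levenshtein

/-- A cost structure for Levenshtein edit distance (as in the older Mathlib). -/
structure Cost (α β δ : Type*) where
  delete : α → δ
  insert : β → δ
  substitute : α → β → δ

/-- Helper for `suffixLevenshtein` (as in the older Mathlib). -/
def impl {α β δ : Type*} [AddZeroClass δ] [Min δ] (C : Cost α β δ) (xs : List α) (y : β)
    (d : {r : List δ // 0 < r.length}) : {r : List δ // 0 < r.length} :=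
  let ⟨ds, w⟩ := d
  xs.zip (ds.zip ds.tail) |>.foldr
    (init := ⟨[C.insert y + ds.getLast (List.length_pos_iff.mp w)], by simp⟩)
    (fun ⟨x, d₀, d₁⟩ ⟨r, w⟩ =>
      ⟨min (C.delete x + r[0]) (min (C.insert y + d₀) (C.substitute x y + d₁)) :: r, by simp⟩)

end Levenshtein

/-- `suffixLevenshtein C xs ys` computes the Levenshtein distance from each suffix of `xs`
to `ys` (as in the older Mathlib). -/
def suffixLevenshtein {α β δ : Type*} [AddZeroClass δ] [Min δ] (C : Levenshtein.Cost α β δ)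
    (xs : List α) (ys : List β) : {r : List δ // 0 < r.length} :=
  ys.foldr
    (fun y dists => Levenshtein.impl C xs y dists)
    (xs.foldr (init := ⟨[0], by simp⟩)
      (fun a ⟨ds, w⟩ => ⟨(C.delete a + ds[0]) :: ds, by simp⟩))

/-- The Levenshtein distance (as in the older Mathlib). -/
def levenshtein {α β δ : Type*} [AddZeroClass δ] [Min δ] (C : Levenshtein.Cost α β δ)
    (xs : List α) (ys : List β) : δ :=
  let ⟨r, w⟩ := suffixLevenshtein C xs ys
  r[0]

/-- Cost structure for the generalized Levenshtein distance:
insertions and deletions cost `γ`, substitutions cost `θ`. -/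
def levCost (A : Type*) [DecidableEq A] (γ θ : ℝ) : Levenshtein.Cost A A ℝ where
  delete _ := γ
  insert _ := γ
  substitute a b := if a = b then 0 else θ

/-- The generalized Levenshtein distance `lev_{γ,θ}` between two words over `A`:
the minimal total cost of transforming one word into the other by insertions and
deletions (of cost `γ`) and substitutions (of cost `θ`). -/
def lev {A : Type*} [DecidableEq A] (γ θ : ℝ) (u v : List A) : ℝ :=
  levenshtein (levCost A γ θ) u v

/-- The isometry group of a language `L ⊆ A*` with respect to a distance `d` on `A*`:
the group (under composition) of bijections of `L` preserving `d`. -/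
def IsomGroup {A : Type*} (d : List A → List A → ℝ) (L : Set (List A)) :
    Subgroup (Equiv.Perm L) where
  carrier := {φ : Equiv.Perm L | ∀ u v : L, d (φ u) (φ v) = d u v}
  one_mem' := by intro u v; rfl
  mul_mem' := by intro φ ψ hφ hψ u v; simp only [Equiv.Perm.mul_apply]; rw [hφ, hψ]
  inv_mem' := by
    intro φ hφ u v
    have h := hφ (φ⁻¹ u) (φ⁻¹ v)
    simpa using h.symm

/-! Over a one-letter alphabet every word is `a ^ n` and `lev_{1,θ}(a ^ m, a ^ n) = |m - n|`, so an
isometry of `L` is an isometry of its set of lengths `S ⊆ ℕ`: either `n ↦ n + c` or `n ↦ c - n`.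
A translation of `S` must fix `min S`, hence is the identity; two reflections differ by a
translation, hence coincide. So `Isom_θ(L)` has at most one nontrivial element. -/

namespace Levenshtein

variable {α β δ : Type*} [AddZeroClass δ] [Min δ] (C : Cost α β δ)

theorem impl_length (xs : List α) (y : β) (d : {r : List δ // 0 < r.length})
    (w : d.1.length = xs.length + 1) :
    (impl C xs y d).1.length = xs.length + 1 := by
  induction xs generalizing d with
  | nil => rfl
  | cons x xs ih =>
    match d, w with
    | ⟨d₀ :: d₁ :: ds, _⟩, w =>
      dsimp [impl]
      congr 1
      exact ih ⟨d₁ :: ds, by simp⟩ (by simpa using w)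

theorem impl_cons (x : α) (xs : List α) (y : β) (d₀ d₁ : δ) (ds : List δ) (w) :
    (impl C (x :: xs) y ⟨d₀ :: d₁ :: ds, w⟩).1 =
      min (C.delete x + (impl C xs y ⟨d₁ :: ds, by simp⟩).1[0]'(impl C xs y _).2)
        (min (C.insert y + d₀) (C.substitute x y + d₁)) ::
        (impl C xs y ⟨d₁ :: ds, by simp⟩).1 :=
  rfl

end Levenshtein

section SuffixLevenshtein

variable {α β δ : Type*} [AddZeroClass δ] [Min δ] (C : Levenshtein.Cost α β δ)

theorem suffixLevenshtein_length (xs : List α) (ys : List β) :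
    (suffixLevenshtein C xs ys).1.length = xs.length + 1 := by
  induction ys with
  | nil =>
    induction xs with
    | nil => rfl
    | cons _ xs ih => simpa [suffixLevenshtein] using ih
  | cons y ys ih => exact Levenshtein.impl_length C xs y _ ih

theorem suffixLevenshtein_cons_tail (x : α) (xs : List α) (ys : List β) :
    (suffixLevenshtein C (x :: xs) ys).1.tail = (suffixLevenshtein C xs ys).1 := by
  induction ys with
  | nil => rfl
  | cons y ys ih =>
    change (Levenshtein.impl C (x :: xs) y (suffixLevenshtein C (x :: xs) ys)).1.tail =
      (Levenshtein.impl C xs y (suffixLevenshtein C xs ys)).1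
    have hlen := suffixLevenshtein_length C (x :: xs) ys
    generalize suffixLevenshtein C (x :: xs) ys = D at ih hlen ⊢
    generalize suffixLevenshtein C xs ys = E at ih ⊢
    obtain ⟨_ | ⟨d₀, _ | ⟨d₁, ds⟩⟩, w⟩ := D
    · simp at w
    · simp at hlen
    · obtain ⟨m, wm⟩ := E
      dsimp only at ih
      subst ih
      rw [Levenshtein.impl_cons]
      rfl

theorem suffixLevenshtein_cons (x : α) (xs : List α) (ys : List β) :
    (suffixLevenshtein C (x :: xs) ys).1 =
      levenshtein C (x :: xs) ys :: (suffixLevenshtein C xs ys).1 := by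
  have htail := suffixLevenshtein_cons_tail C x xs ys
  change _ = (suffixLevenshtein C (x :: xs) ys).1[0]'(suffixLevenshtein C (x :: xs) ys).2 :: _
  generalize suffixLevenshtein C (x :: xs) ys = D at htail ⊢
  obtain ⟨_ | ⟨d, l⟩, w⟩ := D
  · simp at w
  · simpa using htail

@[simp] theorem levenshtein_nil_nil : levenshtein C [] [] = 0 := rfl

theorem levenshtein_cons_nil (x : α) (xs : List α) :
    levenshtein C (x :: xs) [] = C.delete x + levenshtein C xs [] := rfl

theorem levenshtein_nil_cons (y : β) (ys : List β) :
    levenshtein C [] (y :: ys) = C.insert y + levenshtein C [] ys := by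
  change (Levenshtein.impl C [] y (suffixLevenshtein C [] ys)).1[0]'(Levenshtein.impl C [] y _).2 =
    _ + (suffixLevenshtein C [] ys).1[0]'(suffixLevenshtein C [] ys).2
  have hlen := suffixLevenshtein_length C [] ys
  generalize suffixLevenshtein C [] ys = D at hlen ⊢
  obtain ⟨_ | ⟨d, _ | ⟨_, _⟩⟩, w⟩ := D
  · simp at w
  · rfl
  · simp at hlen

theorem levenshtein_cons_cons (x : α) (xs : List α) (y : β) (ys : List β) :
    levenshtein C (x :: xs) (y :: ys) =
      min (C.delete x + levenshtein C xs (y :: ys))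
        (min (C.insert y + levenshtein C (x :: xs) ys)
          (C.substitute x y + levenshtein C xs ys)) := by
  have hlen := suffixLevenshtein_length C xs ys
  obtain ⟨d₁, ds, hE⟩ : ∃ d₁ ds, (suffixLevenshtein C xs ys).1 = d₁ :: ds := by
    cases h : (suffixLevenshtein C xs ys).1 with
    | nil => simp [h] at hlen
    | cons d ds => exact ⟨d, ds, rfl⟩
  have hD : suffixLevenshtein C (x :: xs) ys = ⟨levenshtein C (x :: xs) ys :: d₁ :: ds, by simp⟩ :=
    Subtype.ext (by rw [suffixLevenshtein_cons, hE])
  have hE' : suffixLevenshtein C xs ys = ⟨d₁ :: ds, by simp⟩ := Subtype.ext hE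
  have hd₁ : levenshtein C xs ys = d₁ := by simp [levenshtein, hE]
  change (Levenshtein.impl C (x :: xs) y (suffixLevenshtein C (x :: xs) ys)).1[0]'
    (Levenshtein.impl C _ y _).2 = min (C.delete x +
      (Levenshtein.impl C xs y (suffixLevenshtein C xs ys)).1[0]'(Levenshtein.impl C _ y _).2) _
  simp only [hD, hE', Levenshtein.impl_cons, List.getElem_cons_zero, hd₁]

end SuffixLevenshtein

section Unary

variable {A : Type*} [DecidableEq A]

theorem lev_replicate_nil (γ θ : ℝ) (a : A) (m : ℕ) :
    lev γ θ (List.replicate m a) [] = γ * m := by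
  induction m with
  | zero => simp [lev]
  | succ m ih =>
    rw [lev, List.replicate_succ, levenshtein_cons_nil, ← lev, ih]
    simp only [levCost]
    push_cast
    ring

theorem lev_nil_replicate (γ θ : ℝ) (a : A) (n : ℕ) :
    lev γ θ [] (List.replicate n a) = γ * n := by
  induction n with
  | zero => simp [lev]
  | succ n ih =>
    rw [lev, List.replicate_succ, levenshtein_nil_cons, ← lev, ih]
    simp only [levCost]
    push_cast
    ring

theorem lev_replicate_replicate {γ : ℝ} (hγ : 0 ≤ γ) (θ : ℝ) (a : A) (m n : ℕ) :
    lev γ θ (List.replicate m a) (List.replicate n a) = γ * |(m : ℝ) - n| := by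
  induction m generalizing n with
  | zero => simp [lev_nil_replicate, abs_of_nonneg]
  | succ m ihm =>
    induction n with
    | zero =>
      rw [List.replicate_zero, lev_replicate_nil, Nat.cast_zero, sub_zero,
        abs_of_nonneg (Nat.cast_nonneg _)]
    | succ n ihn =>
      rw [lev, List.replicate_succ, List.replicate_succ (n := n), levenshtein_cons_cons,
        ← List.replicate_succ, ← List.replicate_succ, ← lev, ← lev, ← lev, ihm, ihn, ihm]
      simp only [levCost, if_pos, zero_add, Nat.cast_succ]
      have hdiff : |(m : ℝ) + 1 - (n + 1)| = |(m : ℝ) - n| := by ring_nf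
      -- an insertion or a deletion changes the length difference by exactly one
      have hstep : ∀ y : ℝ, |y - (m - n)| = 1 → γ * |(m : ℝ) - n| ≤ γ + γ * |y| := by
        intro y hy
        have := abs_sub_abs_le_abs_sub ((m : ℝ) - n) y
        rw [abs_sub_comm _ y, hy] at this
        nlinarith
      rw [hdiff, min_eq_right (hstep _ (by ring_nf; simp)),
        min_eq_right (hstep _ (by ring_nf; simp))]

theorem lev_eq_mul_abs_length_sub {γ : ℝ} (hγ : 0 ≤ γ) (θ : ℝ) {a : A} {u v : List A}
    (hu : ∀ x ∈ u, x = a) (hv : ∀ x ∈ v, x = a) :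
    lev γ θ u v = γ * |(u.length : ℝ) - v.length| := by
  obtain ⟨m, rfl⟩ : ∃ m, u = List.replicate m a := ⟨_, List.eq_replicate_iff.mpr ⟨rfl, hu⟩⟩
  obtain ⟨n, rfl⟩ : ∃ n, v = List.replicate n a := ⟨_, List.eq_replicate_iff.mpr ⟨rfl, hv⟩⟩
  simp only [lev_replicate_replicate hγ, List.length_replicate]

end Unary

theorem exists_eq_add_or_eq_sub_of_abs_sub_eq {X : Type*} {g h : X → ℝ}
    (H : ∀ u v, |g u - g v| = |h u - h v|) :
    (∃ c, ∀ u, g u = h u + c) ∨ ∃ c, ∀ u, g u = c - h u := by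
  rcases isEmpty_or_nonempty X with hX | ⟨⟨p⟩⟩
  · exact Or.inl ⟨0, isEmptyElim⟩
  by_cases htrans : ∀ u, g u - g p = h u - h p
  · exact Or.inl ⟨g p - h p, fun u => by linarith [htrans u]⟩
  obtain ⟨x, hx⟩ := not_forall.mp htrans
  have hxp : g x - g p = -(h x - h p) := (abs_eq_abs.mp (H x p)).resolve_left hx
  refine Or.inr ⟨g p + h p, fun y => ?_⟩
  rcases abs_eq_abs.mp (H y p) with hyp | hyp
  · -- comparing with `x` forces `h y = h p`
    rcases abs_eq_abs.mp (H x y) with hxy | hxy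
    · exact absurd (by linarith) hx
    · linarith
  · linarith

namespace Equiv.Perm

variable {X : Type*} {ℓ : X → ℕ}

theorem eq_one_of_forall_cast_apply_eq_add (hℓ : Function.Injective ℓ) {φ : Perm X} {c : ℝ}
    (hφ : ∀ u, (ℓ (φ u) : ℝ) = ℓ u + c) : φ = 1 := by
  rcases isEmpty_or_nonempty X with hX | hX
  · exact Subsingleton.elim _ _
  -- the element of least length can be moved neither up nor down
  set p := Function.argmin ℓ
  have hp : ∀ u, (ℓ p : ℝ) ≤ ℓ u := fun u => by exact_mod_cast Function.argmin_le ℓ u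
  have hc_nonneg : 0 ≤ c := by linarith [hφ p, hp (φ p)]
  have hc_nonpos : c ≤ 0 := by
    have := hφ (φ.symm p)
    rw [apply_symm_apply] at this
    linarith [hp (φ.symm p)]
  have hc : c = 0 := le_antisymm hc_nonpos hc_nonneg
  ext u
  rw [one_apply]
  have hu := hφ u
  rw [hc, add_zero] at hu
  exact hℓ (by exact_mod_cast hu)

theorem eq_of_forall_cast_apply_eq_sub (hℓ : Function.Injective ℓ) {φ ψ : Perm X} {c d : ℝ}
    (hφ : ∀ u, (ℓ (φ u) : ℝ) = c - ℓ u) (hψ : ∀ u, (ℓ (ψ u) : ℝ) = d - ℓ u) : φ = ψ := by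
  refine mul_inv_eq_one.mp (eq_one_of_forall_cast_apply_eq_add hℓ (c := c - d) fun u => ?_)
  have hψu := hψ (ψ.symm u)
  rw [apply_symm_apply] at hψu
  rw [mul_apply, coe_inv, hφ]
  linarith

theorem exists_forall_cast_apply_eq_sub (hℓ : Function.Injective ℓ) {φ : Perm X}
    (hφ : ∀ u v, |(ℓ (φ u) : ℝ) - ℓ (φ v)| = |(ℓ u : ℝ) - ℓ v|) (hφ1 : φ ≠ 1) :
    ∃ c, ∀ u, (ℓ (φ u) : ℝ) = c - ℓ u :=
  (exists_eq_add_or_eq_sub_of_abs_sub_eq hφ).resolve_left fun ⟨_, hc⟩ =>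
    hφ1 (eq_one_of_forall_cast_apply_eq_add hℓ hc)

theorem eq_of_ne_one_of_abs_sub_eq (hℓ : Function.Injective ℓ) {φ ψ : Perm X}
    (hφ : ∀ u v, |(ℓ (φ u) : ℝ) - ℓ (φ v)| = |(ℓ u : ℝ) - ℓ v|)
    (hψ : ∀ u v, |(ℓ (ψ u) : ℝ) - ℓ (ψ v)| = |(ℓ u : ℝ) - ℓ v|) (hφ1 : φ ≠ 1) (hψ1 : ψ ≠ 1) :
    φ = ψ := by
  obtain ⟨c, hc⟩ := exists_forall_cast_apply_eq_sub hℓ hφ hφ1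
  obtain ⟨d, hd⟩ := exists_forall_cast_apply_eq_sub hℓ hψ hψ1
  exact eq_of_forall_cast_apply_eq_sub hℓ hc hd

end Equiv.Perm

section AtMostOneNontrivial

variable {G : Type*} [Group G]

theorem eq_or_eq_or_eq_of_forall_ne_one_eq (h : ∀ x y : G, x ≠ 1 → y ≠ 1 → x = y)
    (x y z : G) : x = y ∨ x = z ∨ y = z := by
  by_cases hx : x = 1 <;> by_cases hy : y = 1
  · exact Or.inl (hx.trans hy.symm)
  · by_cases hz : z = 1
    · exact Or.inr (Or.inl (hx.trans hz.symm))
    · exact Or.inr (Or.inr (h y z hy hz))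
  · by_cases hz : z = 1
    · exact Or.inr (Or.inr (hy.trans hz.symm))
    · exact Or.inr (Or.inl (h x z hx hz))
  · exact Or.inl (h x y hx hy)

theorem subsingleton_or_nonempty_mulEquiv_zmod_two (h : ∀ x y : G, x ≠ 1 → y ≠ 1 → x = y) :
    Subsingleton G ∨ Nonempty (G ≃* Multiplicative (ZMod 2)) := by
  by_cases htriv : ∀ x : G, x = 1
  · exact Or.inl ⟨fun x y => (htriv x).trans (htriv y).symm⟩
  obtain ⟨g, hg⟩ := not_forall.mp htriv
  have hcard : Nat.card G = 2 := by
    refine Nat.card_eq_two_iff.mpr ⟨1, g, Ne.symm hg, Set.eq_univ_of_forall fun x => ?_⟩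
    by_cases hx : x = 1
    · simp [hx]
    · simp [h x g hx hg]
  exact Or.inr ⟨mulEquivOfPrimeCardEq hcard (by simp)⟩

end AtMostOneNontrivial

theorem stmt_3_general {A : Type*} [DecidableEq A] (a : A) (L : Set (List A))
    (hL : ∀ w ∈ L, ∀ x ∈ w, x = a) (θ : ℝ) :
    (∀ φ ψ χ : IsomGroup (lev 1 θ) L, φ = ψ ∨ φ = χ ∨ ψ = χ) ∧
      (IsomGroup (lev 1 θ) L = ⊥ ∨
        Nonempty (IsomGroup (lev 1 θ) L ≃* Multiplicative (ZMod 2))) := by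
  set ℓ : L → ℕ := fun u => (u : List A).length
  have hℓ : Function.Injective ℓ := fun u v huv => Subtype.ext <| by
    rw [List.eq_replicate_iff.mpr ⟨rfl, hL u u.2⟩, List.eq_replicate_iff.mpr ⟨huv.symm, hL v v.2⟩]
  have hisom (φ : IsomGroup (lev 1 θ) L) (u v : L) :
      |(ℓ (φ.1 u) : ℝ) - ℓ (φ.1 v)| = |(ℓ u : ℝ) - ℓ v| := by
    have := φ.2 u v
    rwa [lev_eq_mul_abs_length_sub zero_le_one θ (hL _ (φ.1 u).2) (hL _ (φ.1 v).2),
      lev_eq_mul_abs_length_sub zero_le_one θ (hL _ u.2) (hL _ v.2), one_mul, one_mul] at this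
  have hnontriv (φ ψ : IsomGroup (lev 1 θ) L) (hφ : φ ≠ 1) (hψ : ψ ≠ 1) : φ = ψ :=
    Subtype.ext <| Equiv.Perm.eq_of_ne_one_of_abs_sub_eq hℓ (hisom φ) (hisom ψ)
      (fun h => hφ (Subtype.ext h)) (fun h => hψ (Subtype.ext h))
  exact ⟨eq_or_eq_or_eq_of_forall_ne_one_eq hnontriv,
    (subsingleton_or_nonempty_mulEquiv_zmod_two hnontriv).imp
      (fun h => @Subgroup.eq_bot_of_subsingleton _ _ _ h) id⟩

/-- For a one-letter alphabet `{a}`, any language `L ⊆ {a}*`, and any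
`θ ∈ (0, 2]`, the isometry group `Isom_θ(L)` has at most two elements; in particular it is
either trivial or isomorphic to the cyclic group of order 2. -/
theorem stmt_3 {A : Type*} [DecidableEq A] (a : A) (L : Set (List A))
    (hL : ∀ w ∈ L, ∀ x ∈ w, x = a) (θ : ℝ) (hθ : θ ∈ Set.Ioc (0 : ℝ) 2) :
    (∀ φ ψ χ : IsomGroup (lev 1 θ) L, φ = ψ ∨ φ = χ ∨ ψ = χ) ∧
      (IsomGroup (lev 1 θ) L = ⊥ ∨
        Nonempty (IsomGroup (lev 1 θ) L ≃* Multiplicative (ZMod 2))) :=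
  stmt_3_general a L hL θ
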